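/- arXiv:1906.00423 — 2 statements merged into one kernel-verified Lean document; each statement's English description precedes it below -/
import Mathlib

section
/- Let v* be the equilibrium value of a 2-TBSG and Q*(s,a) = r(s,a) + γ P(·|s,a)ᵀv*. Suppose ‖Q_w − Q*‖_∞ ≤ ζ and let (π₁, π₂) be the greedy strategy with respect to Q_w (argmax on S₁ states, argmin on S₂ states). Let π₂* be a min-player optimal counterstrategy against π₁, i.e., V^{π₁,π₂*} ≤ V^{π₁,π̄₂} for every min-player strategy π̄₂. Then ‖V^{π₁,π₂*} − v*‖_∞ ≤ 2ζ/(1−γ). -/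
open Finset

/-- Expectation of `V` under the distribution `P(·|s,a)`. -/
noncomputable def pExp {S A : Type*} [Fintype S] (P : S → A → S → ℝ) (V : S → ℝ)
    (s : S) (a : A) : ℝ := ∑ s', P s a s' * V s'

/-- The Bellman operator of a 2-TBSG: max over actions on player 1's states `S1`,
min over actions elsewhere. -/
noncomputable def bellman {S A : Type*} [Fintype S] [DecidableEq S] (S1 : Finset S)
    (act : S → Finset A) (hact : ∀ s, (act s).Nonempty)
    (P : S → A → S → ℝ) (r : S → A → ℝ) (γ : ℝ) (V : S → ℝ) (s : S) : ℝ :=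
  if s ∈ S1 then (act s).sup' (hact s) (fun a => r s a + γ * pExp P V s a)
  else (act s).inf' (hact s) (fun a => r s a + γ * pExp P V s a)

/-- Sup norm of a function on a finite nonempty state space. -/
noncomputable def supNorm {S : Type*} [Fintype S] [Nonempty S] (V : S → ℝ) : ℝ :=
  Finset.univ.sup' Finset.univ_nonempty (fun s => |V s|)

/-- The strategy-specific Bellman operator `T_π`. -/
noncomputable def Tpi {S A : Type*} [Fintype S] (P : S → A → S → ℝ) (r : S → A → ℝ)
    (γ : ℝ) (π : S → A) (V : S → ℝ) (s : S) : ℝ :=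
  r s (π s) + γ * pExp P V s (π s)

/-- The joint strategy combining player 1's strategy on `S1` and player 2's elsewhere. -/
noncomputable def comb {S A : Type*} [DecidableEq S] (S1 : Finset S)
    (π1 π2 : S → A) (s : S) : A :=
  if s ∈ S1 then π1 s else π2 s

lemma pExp_abs_sub_le {S A : Type*} [Fintype S] {P : S → A → S → ℝ}
    (hP0 : ∀ s a s', 0 ≤ P s a s') (hP1 : ∀ s a, ∑ s', P s a s' = 1)
    {V W : S → ℝ} {c : ℝ} (h : ∀ s', |V s' - W s'| ≤ c) (s : S) (a : A) :
    |pExp P V s a - pExp P W s a| ≤ c := by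
  have heq : pExp P V s a - pExp P W s a = ∑ s', P s a s' * (V s' - W s') := by
    simp [pExp, mul_sub, Finset.sum_sub_distrib]
  rw [heq]
  calc |∑ s', P s a s' * (V s' - W s')| ≤ ∑ s', |P s a s' * (V s' - W s')| :=
        Finset.abs_sum_le_sum_abs _ _
    _ ≤ ∑ s', P s a s' * c := Finset.sum_le_sum fun s' _ => by
        rw [abs_mul, abs_of_nonneg (hP0 s a s')]
        exact mul_le_mul_of_nonneg_left (h s') (hP0 s a s')
    _ = c := by rw [← Finset.sum_mul, hP1, one_mul]

lemma exists_Tpi_fixed {S A : Type*} [Fintype S] (P : S → A → S → ℝ)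
    (hP0 : ∀ s a s', 0 ≤ P s a s') (hP1 : ∀ s a, ∑ s', P s a s' = 1)
    (r : S → A → ℝ) (γ : ℝ) (hγ0 : 0 ≤ γ) (hγ1 : γ < 1) (π : S → A) :
    ∃ V : S → ℝ, Tpi P r γ π V = V := by
  have hL : LipschitzWith ⟨γ, hγ0⟩ (Tpi P r γ π) := by
    apply LipschitzWith.of_dist_le_mul
    intro V W
    show dist _ _ ≤ γ * dist V W
    rw [dist_pi_le_iff (mul_nonneg hγ0 dist_nonneg)]
    intro s
    rw [Real.dist_eq]
    have habs : ∀ s', |V s' - W s'| ≤ dist V W := fun s' => by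
      rw [← Real.dist_eq]; exact dist_le_pi_dist V W s'
    have hexp := pExp_abs_sub_le hP0 hP1 habs s (π s)
    have heq : Tpi P r γ π V s - Tpi P r γ π W s
        = γ * (pExp P V s (π s) - pExp P W s (π s)) := by
      simp only [Tpi]; ring
    rw [heq, abs_mul, abs_of_nonneg hγ0]
    exact mul_le_mul_of_nonneg_left hexp hγ0
  have hC : ContractingWith ⟨γ, hγ0⟩ (Tpi P r γ π) := ⟨by exact_mod_cast hγ1, hL⟩
  exact ⟨hC.fixedPoint _, hC.fixedPoint_isFixedPt⟩

theorem greedy_counterstrategy_value_close {S A : Type*} [Fintype S] [DecidableEq S]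
    [Nonempty S] [Fintype A]
    (S1 : Finset S) (act : S → Finset A) (hact : ∀ s, (act s).Nonempty)
    (P : S → A → S → ℝ) (hP0 : ∀ s a s', 0 ≤ P s a s')
    (hP1 : ∀ s a, ∑ s', P s a s' = 1)
    (r : S → A → ℝ) (hr : ∀ s a, r s a ∈ Set.Icc (0:ℝ) 1)
    (γ : ℝ) (hγ0 : 0 ≤ γ) (hγ1 : γ < 1)
    -- the equilibrium value: the fixed point of the Bellman operator
    (vstar : S → ℝ) (hv : bellman S1 act hact P r γ vstar = vstar)
    -- the equilibrium Q-function and an approximation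
    (Qstar : S → A → ℝ) (hQstar : ∀ s a, Qstar s a = r s a + γ * pExp P vstar s a)
    (Qw : S → A → ℝ) (ζ : ℝ) (hQw : ∀ s, ∀ a ∈ act s, |Qw s a - Qstar s a| ≤ ζ)
    -- the greedy strategy (π1, π2) with respect to Qw
    (π1 π2 : S → A) (hπ1 : ∀ s, π1 s ∈ act s) (hπ2 : ∀ s, π2 s ∈ act s)
    (hπ1max : ∀ s ∈ S1, ∀ a ∈ act s, Qw s a ≤ Qw s (π1 s))
    (hπ2min : ∀ s ∉ S1, ∀ a ∈ act s, Qw s (π2 s) ≤ Qw s a)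
    -- π2star: a min-player optimal counterstrategy against π1, with value Vc
    (π2star : S → A) (hπ2star : ∀ s, π2star s ∈ act s)
    (Vc : S → ℝ) (hVc : Tpi P r γ (comb S1 π1 π2star) Vc = Vc)
    (hopt : ∀ π2' : S → A, (∀ s, π2' s ∈ act s) →
      ∀ V' : S → ℝ, Tpi P r γ (comb S1 π1 π2') V' = V' → ∀ s, Vc s ≤ V' s) :
    supNorm (fun s => Vc s - vstar s) ≤ 2 * ζ / (1 - γ) := by
  have h1γ : 0 < 1 - γ := by linarith
  obtain ⟨s₀⟩ := ‹Nonempty S›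
  obtain ⟨a₀, ha₀⟩ := hact s₀
  have hζ : 0 ≤ ζ := le_trans (abs_nonneg _) (hQw s₀ a₀ ha₀)
  have hQlo : ∀ s, ∀ a ∈ act s, Qstar s a - ζ ≤ Qw s a := fun s a ha => by
    have := abs_le.1 (hQw s a ha); linarith [this.1]
  have hQhi : ∀ s, ∀ a ∈ act s, Qw s a ≤ Qstar s a + ζ := fun s a ha => by
    have := abs_le.1 (hQw s a ha); linarith [this.2]
  have hv' : ∀ s, bellman S1 act hact P r γ vstar s = vstar s := fun s => congrFun hv s
  have hle1 : ∀ s ∈ S1, ∀ a ∈ act s, Qstar s a ≤ vstar s := by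
    intro s hs a ha
    rw [← hv' s]
    simp only [bellman, if_pos hs]
    rw [hQstar]
    exact Finset.le_sup' (fun a => r s a + γ * pExp P vstar s a) ha
  have hle2 : ∀ s ∉ S1, ∀ a ∈ act s, vstar s ≤ Qstar s a := by
    intro s hs a ha
    rw [← hv' s]
    simp only [bellman, if_neg hs]
    rw [hQstar]
    exact Finset.inf'_le (fun a => r s a + γ * pExp P vstar s a) ha
  have hex1 : ∀ s ∈ S1, ∃ a ∈ act s, vstar s = Qstar s a := by
    intro s hs
    obtain ⟨a, ha, h⟩ := Finset.exists_mem_eq_sup' (hact s)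
      (fun a => r s a + γ * pExp P vstar s a)
    exact ⟨a, ha, by rw [← hv' s]; simp only [bellman, if_pos hs]; rw [h, hQstar]⟩
  have hex2 : ∀ s ∉ S1, ∃ a ∈ act s, vstar s = Qstar s a := by
    intro s hs
    obtain ⟨a, ha, h⟩ := Finset.exists_mem_eq_inf' (hact s)
      (fun a => r s a + γ * pExp P vstar s a)
    exact ⟨a, ha, by rw [← hv' s]; simp only [bellman, if_neg hs]; rw [h, hQstar]⟩
  -- key pointwise bounds at vstar
  have keyA : ∀ (π2' : S → A), (∀ s, π2' s ∈ act s) →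
      ∀ s, vstar s - Qstar s (comb S1 π1 π2' s) ≤ 2 * ζ := by
    intro π2' hπ' s
    by_cases hs : s ∈ S1
    · simp only [comb, if_pos hs]
      obtain ⟨a, ha, hva⟩ := hex1 s hs
      have h1 := hQlo s a ha
      have h2 := hπ1max s hs a ha
      have h3 := hQhi s (π1 s) (hπ1 s)
      linarith
    · simp only [comb, if_neg hs]
      have := hle2 s hs (π2' s) (hπ' s)
      linarith
  have keyB : ∀ s, Qstar s (comb S1 π1 π2 s) - vstar s ≤ 2 * ζ := by
    intro s
    by_cases hs : s ∈ S1
    · simp only [comb, if_pos hs]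
      have := hle1 s hs (π1 s) (hπ1 s)
      linarith
    · simp only [comb, if_neg hs]
      obtain ⟨a, ha, hva⟩ := hex2 s hs
      have h1 := hQlo s (π2 s) (hπ2 s)
      have h2 := hπ2min s hs a ha
      have h3 := hQhi s a ha
      linarith
  -- fixed point of the joint greedy strategy
  obtain ⟨V', hV'⟩ := exists_Tpi_fixed P hP0 hP1 r γ hγ0 hγ1 (comb S1 π1 π2)
  have hVcV' : ∀ s, Vc s ≤ V' s := hopt π2 hπ2 V' hV'
  set M' := supNorm (fun s => V' s - vstar s) with hM'def
  have hM'le : ∀ s', |V' s' - vstar s'| ≤ M' := fun s' => by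
    rw [hM'def, supNorm]
    exact Finset.le_sup' (fun s => |V' s - vstar s|) (Finset.mem_univ s')
  have hstep : ∀ s, |V' s - vstar s| ≤ 2 * ζ + γ * M' := by
    intro s
    have hfix : Tpi P r γ (comb S1 π1 π2) V' s = V' s := congrFun hV' s
    have hexp := pExp_abs_sub_le hP0 hP1 hM'le s (comb S1 π1 π2 s)
    have habs := abs_le.1 hexp
    have heq : V' s = Qstar s (comb S1 π1 π2 s)
        + γ * (pExp P V' s (comb S1 π1 π2 s) - pExp P vstar s (comb S1 π1 π2 s)) := by
      rw [← hfix]; simp only [Tpi]; rw [hQstar]; ring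
    have hA := keyA π2 hπ2 s
    have hB := keyB s
    rw [abs_le]
    constructor <;> [nlinarith [habs.1, habs.2]; nlinarith [habs.1, habs.2]]
  have hM' : M' ≤ 2 * ζ / (1 - γ) := by
    obtain ⟨s, _, hs⟩ := Finset.exists_mem_eq_sup' (Finset.univ_nonempty (α := S))
      (fun s => |V' s - vstar s|)
    have hM'eq : M' = |V' s - vstar s| := hs
    have h2 := hstep s
    rw [← hM'eq] at h2
    rw [le_div_iff₀ h1γ]; nlinarith
  -- final bound
  set M := supNorm (fun s => Vc s - vstar s) with hMdef
  have hMle : ∀ s', |Vc s' - vstar s'| ≤ M := fun s' => by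
    rw [hMdef, supNorm]
    exact Finset.le_sup' (fun s => |Vc s - vstar s|) (Finset.mem_univ s')
  have hub : ∀ s, Vc s - vstar s ≤ 2 * ζ / (1 - γ) := fun s =>
    le_trans (by linarith [hVcV' s, (abs_le.1 (hM'le s)).2]) hM'
  obtain ⟨s, _, hs⟩ := Finset.exists_mem_eq_sup' (Finset.univ_nonempty (α := S))
    (fun s => |Vc s - vstar s|)
  have hMeq : M = |Vc s - vstar s| := hs
  rcases le_or_gt (Vc s) (vstar s) with h | h
  · have hfix : Tpi P r γ (comb S1 π1 π2star) Vc s = Vc s := congrFun hVc s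
    have hexp := pExp_abs_sub_le hP0 hP1 hMle s (comb S1 π1 π2star s)
    have habs := abs_le.1 hexp
    have heq : vstar s - Vc s = (vstar s - Qstar s (comb S1 π1 π2star s))
        + γ * (pExp P vstar s (comb S1 π1 π2star s) - pExp P Vc s (comb S1 π1 π2star s)) := by
      rw [← hfix]; simp only [Tpi]; rw [hQstar]; ring
    have hA := keyA π2star hπ2star s
    have h2 : γ * (pExp P vstar s (comb S1 π1 π2star s) - pExp P Vc s (comb S1 π1 π2star s))
        ≤ γ * M := mul_le_mul_of_nonneg_left (by linarith [habs.1]) hγ0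
    have hM2 : M ≤ 2 * ζ + γ * M := by
      have h1 : M = vstar s - Vc s := by rw [hMeq, abs_of_nonpos (by linarith)]; ring
      linarith [h1]
    rw [le_div_iff₀ h1γ]; nlinarith
  · rw [hMeq, abs_of_pos (by linarith)]
    exact hub s
end

section
/- Suppose value functions V, W of a 2-TBSG satisfy V ≤ T_{π₁,min}V, T_{max,π₂}W ≤ W, ‖V − v*‖_∞ ≤ ε and ‖W − v*‖_∞ ≤ ε. Then the strategy pair (π₁, π₂) is an ε-optimal strategy, i.e., ‖min_{π̄₂}V^{π₁,π̄₂} − v*‖_∞ ≤ ε and ‖max_{π̄₁}V^{π̄₁,π₂} − v*‖_∞ ≤ ε. -/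
open Finset

/-- One-sided Bellman operator: player 1's strategy fixed, minimization over
player 2's actions. -/
noncomputable def Tp1min {S A : Type*} [Fintype S] [DecidableEq S] (S1 : Finset S)
    (act : S → Finset A) (hact : ∀ s, (act s).Nonempty)
    (P : S → A → S → ℝ) (r : S → A → ℝ) (γ : ℝ) (π1 : S → A) (V : S → ℝ) (s : S) : ℝ :=
  if s ∈ S1 then r s (π1 s) + γ * pExp P V s (π1 s)
  else (act s).inf' (hact s) (fun a => r s a + γ * pExp P V s a)

/-- One-sided Bellman operator: maximization over player 1's actions, player 2's
strategy fixed. -/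
noncomputable def Tmaxp2 {S A : Type*} [Fintype S] [DecidableEq S] (S1 : Finset S)
    (act : S → Finset A) (hact : ∀ s, (act s).Nonempty)
    (P : S → A → S → ℝ) (r : S → A → ℝ) (γ : ℝ) (π2 : S → A) (V : S → ℝ) (s : S) : ℝ :=
  if s ∈ S1 then (act s).sup' (hact s) (fun a => r s a + γ * pExp P V s a)
  else r s (π2 s) + γ * pExp P V s (π2 s)


lemma sup'_sub_le' {A : Type*} {t : Finset A} (ne : t.Nonempty) (F G : A → ℝ) (c : ℝ)
    (h : ∀ a ∈ t, F a - G a ≤ c) : t.sup' ne F - t.sup' ne G ≤ c := by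
  rw [sub_le_iff_le_add]
  apply Finset.sup'_le
  intro a ha
  have := h a ha
  have := Finset.le_sup' G ha
  linarith

lemma inf'_sub_le' {A : Type*} {t : Finset A} (ne : t.Nonempty) (F G : A → ℝ) (c : ℝ)
    (h : ∀ a ∈ t, F a - G a ≤ c) : t.inf' ne F - t.inf' ne G ≤ c := by
  obtain ⟨a, ha, heq⟩ := Finset.exists_mem_eq_inf' ne G
  have h1 : t.inf' ne F ≤ F a := Finset.inf'_le F ha
  have := h a ha
  rw [heq]; linarith

lemma pExp_sub_le {S A : Type*} [Fintype S] [Nonempty S] (P : S → A → S → ℝ)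
    (hP0 : ∀ s a s', 0 ≤ P s a s') (hP1 : ∀ s a, ∑ s', P s a s' = 1)
    (f g : S → ℝ) (s : S) (a : A) :
    pExp P f s a - pExp P g s a ≤
      Finset.univ.sup' Finset.univ_nonempty (fun t => f t - g t) := by
  set M := Finset.univ.sup' Finset.univ_nonempty (fun t => f t - g t) with hM
  unfold pExp
  rw [← Finset.sum_sub_distrib]
  calc ∑ s', (P s a s' * f s' - P s a s' * g s')
      ≤ ∑ s' : S, P s a s' * M := by
        apply Finset.sum_le_sum
        intro i _
        rw [← mul_sub]
        exact mul_le_mul_of_nonneg_left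
          (Finset.le_sup' (fun t => f t - g t) (Finset.mem_univ i)) (hP0 s a i)
    _ = M := by rw [← Finset.sum_mul, hP1, one_mul]

lemma act_sub_le {S A : Type*} [Fintype S] [Nonempty S] (P : S → A → S → ℝ)
    (hP0 : ∀ s a s', 0 ≤ P s a s') (hP1 : ∀ s a, ∑ s', P s a s' = 1)
    (r : S → A → ℝ) (γ : ℝ) (hγ0 : 0 ≤ γ) (f g : S → ℝ) (s : S) (a : A) :
    (r s a + γ * pExp P f s a) - (r s a + γ * pExp P g s a) ≤
      γ * Finset.univ.sup' Finset.univ_nonempty (fun t => f t - g t) := by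
  have := pExp_sub_le P hP0 hP1 f g s a
  nlinarith [mul_le_mul_of_nonneg_left this hγ0]

lemma le_of_contract {S : Type*} [Fintype S] [Nonempty S] {γ : ℝ} (hγ0 : 0 ≤ γ)
    (hγ1 : γ < 1) (X Y : S → ℝ)
    (h : ∀ s, X s - Y s ≤ γ * Finset.univ.sup' Finset.univ_nonempty (fun t => X t - Y t)) :
    ∀ s, X s ≤ Y s := by
  set M := Finset.univ.sup' Finset.univ_nonempty (fun t => X t - Y t) with hM
  have hMle : M ≤ γ * M := Finset.sup'_le _ _ (fun s _ => h s)
  have hM0 : M ≤ 0 := by nlinarith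
  intro s
  have : X s - Y s ≤ M := Finset.le_sup' (fun t => X t - Y t) (Finset.mem_univ s)
  linarith

theorem two_sided_eps_optimal {S A : Type*} [Fintype S] [DecidableEq S] [Nonempty S]
    [Fintype A]
    (S1 : Finset S) (act : S → Finset A) (hact : ∀ s, (act s).Nonempty)
    (P : S → A → S → ℝ) (hP0 : ∀ s a s', 0 ≤ P s a s')
    (hP1 : ∀ s a, ∑ s', P s a s' = 1)
    (r : S → A → ℝ) (hr : ∀ s a, r s a ∈ Set.Icc (0:ℝ) 1)
    (γ : ℝ) (hγ0 : 0 ≤ γ) (hγ1 : γ < 1)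
    (π1 π2 : S → A) (hπ1 : ∀ s, π1 s ∈ act s) (hπ2 : ∀ s, π2 s ∈ act s)
    -- the equilibrium value: the fixed point of the Bellman operator
    (vstar : S → ℝ) (hv : bellman S1 act hact P r γ vstar = vstar)
    -- Vlow = min_{π̄₂} V^{π₁,π̄₂}: the fixed point of T_{π₁,min}
    (Vlow : S → ℝ) (hVlow : Tp1min S1 act hact P r γ π1 Vlow = Vlow)
    -- Whigh = max_{π̄₁} V^{π̄₁,π₂}: the fixed point of T_{max,π₂}
    (Whigh : S → ℝ) (hWhigh : Tmaxp2 S1 act hact P r γ π2 Whigh = Whigh)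
    (V W : S → ℝ) (ε : ℝ)
    (hV : ∀ s, V s ≤ Tp1min S1 act hact P r γ π1 V s)
    (hW : ∀ s, Tmaxp2 S1 act hact P r γ π2 W s ≤ W s)
    (hVε : supNorm (fun s => V s - vstar s) ≤ ε)
    (hWε : supNorm (fun s => W s - vstar s) ≤ ε) :
    supNorm (fun s => Vlow s - vstar s) ≤ ε ∧
    supNorm (fun s => Whigh s - vstar s) ≤ ε := by

  -- abbreviations
  have hact_sub := act_sub_le P hP0 hP1 r γ hγ0
  -- Step 1: V ≤ Vlow
  have hVle : ∀ s, V s ≤ Vlow s := by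
    apply le_of_contract hγ0 hγ1
    intro s
    have h1 : V s ≤ Tp1min S1 act hact P r γ π1 V s := hV s
    have h2 : Tp1min S1 act hact P r γ π1 Vlow s = Vlow s := congrFun hVlow s
    have h3 : Tp1min S1 act hact P r γ π1 V s - Tp1min S1 act hact P r γ π1 Vlow s ≤
        γ * Finset.univ.sup' Finset.univ_nonempty (fun t => V t - Vlow t) := by
      unfold Tp1min
      by_cases hs : s ∈ S1
      · simp only [hs, if_true]; exact hact_sub V Vlow s (π1 s)
      · simp only [hs, if_false]
        exact inf'_sub_le' _ _ _ _ (fun a _ => hact_sub V Vlow s a)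
    linarith
  -- Step 2: Vlow ≤ vstar
  have hVlowle : ∀ s, Vlow s ≤ vstar s := by
    apply le_of_contract hγ0 hγ1
    intro s
    have h1 : Vlow s ≤ bellman S1 act hact P r γ Vlow s := by
      conv_lhs => rw [← congrFun hVlow s]
      unfold Tp1min bellman
      by_cases hs : s ∈ S1
      · simp only [hs, if_true]
        exact Finset.le_sup' (fun a => r s a + γ * pExp P Vlow s a) (hπ1 s)
      · simp only [hs, if_false]; exact le_refl _
    have h2 : bellman S1 act hact P r γ vstar s = vstar s := congrFun hv s
    have h3 : bellman S1 act hact P r γ Vlow s - bellman S1 act hact P r γ vstar s ≤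
        γ * Finset.univ.sup' Finset.univ_nonempty (fun t => Vlow t - vstar t) := by
      unfold bellman
      by_cases hs : s ∈ S1
      · simp only [hs, if_true]
        exact sup'_sub_le' _ _ _ _ (fun a _ => hact_sub Vlow vstar s a)
      · simp only [hs, if_false]
        exact inf'_sub_le' _ _ _ _ (fun a _ => hact_sub Vlow vstar s a)
    linarith
  -- Step 3: vstar ≤ Whigh
  have hvle : ∀ s, vstar s ≤ Whigh s := by
    apply le_of_contract hγ0 hγ1
    intro s
    have h1 : vstar s ≤ Tmaxp2 S1 act hact P r γ π2 vstar s := by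
      conv_lhs => rw [← congrFun hv s]
      unfold Tmaxp2 bellman
      by_cases hs : s ∈ S1
      · simp only [hs, if_true]; exact le_refl _
      · simp only [hs, if_false]
        exact Finset.inf'_le (fun a => r s a + γ * pExp P vstar s a) (hπ2 s)
    have h2 : Tmaxp2 S1 act hact P r γ π2 Whigh s = Whigh s := congrFun hWhigh s
    have h3 : Tmaxp2 S1 act hact P r γ π2 vstar s - Tmaxp2 S1 act hact P r γ π2 Whigh s ≤
        γ * Finset.univ.sup' Finset.univ_nonempty (fun t => vstar t - Whigh t) := by
      unfold Tmaxp2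
      by_cases hs : s ∈ S1
      · simp only [hs, if_true]
        exact sup'_sub_le' _ _ _ _ (fun a _ => hact_sub vstar Whigh s a)
      · simp only [hs, if_false]; exact hact_sub vstar Whigh s (π2 s)
    linarith
  -- Step 4: Whigh ≤ W
  have hWle : ∀ s, Whigh s ≤ W s := by
    apply le_of_contract hγ0 hγ1
    intro s
    have h1 : Tmaxp2 S1 act hact P r γ π2 Whigh s = Whigh s := congrFun hWhigh s
    have h2 : Tmaxp2 S1 act hact P r γ π2 W s ≤ W s := hW s
    have h3 : Tmaxp2 S1 act hact P r γ π2 Whigh s - Tmaxp2 S1 act hact P r γ π2 W s ≤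
        γ * Finset.univ.sup' Finset.univ_nonempty (fun t => Whigh t - W t) := by
      unfold Tmaxp2
      by_cases hs : s ∈ S1
      · simp only [hs, if_true]
        exact sup'_sub_le' _ _ _ _ (fun a _ => hact_sub Whigh W s a)
      · simp only [hs, if_false]; exact hact_sub Whigh W s (π2 s)
    linarith
  constructor
  · apply Finset.sup'_le
    intro s _
    have hVs : |V s - vstar s| ≤ ε :=
      le_trans (Finset.le_sup' (fun t => |V t - vstar t|) (Finset.mem_univ s)) hVε
    have h1 := hVle s
    have h2 := hVlowle s
    show |Vlow s - vstar s| ≤ ε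
    rw [abs_of_nonpos (by linarith)]
    have := neg_abs_le (V s - vstar s)
    linarith
  · apply Finset.sup'_le
    intro s _
    have hWs : |W s - vstar s| ≤ ε :=
      le_trans (Finset.le_sup' (fun t => |W t - vstar t|) (Finset.mem_univ s)) hWε
    have h1 := hvle s
    have h2 := hWle s
    show |Whigh s - vstar s| ≤ ε
    rw [abs_of_nonneg (by linarith)]
    have := le_abs_self (W s - vstar s)
    linarith
end
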